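/- (Gauge equivalence of the MNLS and GNLS equations.) Let q : ℝ² → M_{k×(n−k)}(ℂ) be a smooth solution of the matrix nonlinear Schrödinger equation q_t = i(q_xx + 2 q q* q), let u = [[0, q],[−q*, 0]] and Q₂ = [[−i q q*, i q_x],[i q_x*, i q* q]], and let E : ℝ² → U(n) be a smooth map satisfying E⁻¹E_x = u and E⁻¹E_t = Q₂. Then γ := E a E⁻¹, with a = (i/2)·diag(I_k, −I_{n−k}), satisfies the geometric nonlinear Schrödinger equation γ_t = [γ, γ_xx]. -/

import Mathlib

/-!
For a unitary frame with `E⁻¹E' = A` skew-Hermitian, `(E X E⁻¹)' = E ([A, X] + X') E⁻¹`. With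
`A = u` and `A = Q₂` this gives `γ_x = E [u, a] E⁻¹`, `γ_xx = E ([u, [u, a]] + [u_x, a]) E⁻¹` and
`γ_t = E [Q₂, a] E⁻¹`, so conjugation by `E` turns the GNLS equation into the pointwise block
identity `[Q₂, a] = [a, [u, [u, a]] + [u_x, a]]`. Both sides equal `u_x`: `ad a` multiplies
off-diagonal blocks by `± i` and kills diagonal ones, and `[u, [u, a]]` is block diagonal.
-/

open Matrix

attribute [local instance] Matrix.normedAddCommGroup Matrix.normedSpace

attribute [local instance] LieRing.ofAssociativeRing

section Calculus

variable {l m n o : Type*} [Fintype l] [Fintype m] [Fintype n] [Fintype o]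

theorem HasDerivAt.matrix_mul {f : ℝ → Matrix l m ℂ} {g : ℝ → Matrix m n ℂ}
    {f' : Matrix l m ℂ} {g' : Matrix m n ℂ} {x : ℝ}
    (hf : HasDerivAt f f' x) (hg : HasDerivAt g g' x) :
    HasDerivAt (fun y => f y * g y) (f' * g x + f x * g') x := by
  let B : Matrix l m ℂ →L[ℝ] Matrix m n ℂ →L[ℝ] Matrix l n ℂ :=
    LinearMap.toContinuousLinearMap
      (LinearMap.toContinuousLinearMap.toLinearMap ∘ₗ mulLinearMap ℝ)
  rw [add_comm]
  exact B.hasDerivAt_of_bilinear (fun _ => hf) (fun _ => hg)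

theorem HasDerivAt.matrix_lie {f g : ℝ → Matrix n n ℂ} {f' g' : Matrix n n ℂ} {x : ℝ}
    (hf : HasDerivAt f f' x) (hg : HasDerivAt g g' x) :
    HasDerivAt (fun y => ⁅f y, g y⁆) (⁅f', g x⁆ + ⁅f x, g'⁆) x := by
  simp only [Ring.lie_def]
  exact ((hf.matrix_mul hg).sub (hg.matrix_mul hf)).congr_deriv (by abel)

theorem HasDerivAt.matrix_conjTranspose {f : ℝ → Matrix l m ℂ} {f' : Matrix l m ℂ} {x : ℝ}
    (hf : HasDerivAt f f' x) : HasDerivAt (fun y => (f y)ᴴ) f'ᴴ x := by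
  let L : Matrix l m ℂ →L[ℝ] Matrix m l ℂ := LinearMap.toContinuousLinearMap
    { toFun := conjTranspose
      map_add' := conjTranspose_add
      map_smul' := fun r A => by simp [conjTranspose_smul] }
  exact L.hasFDerivAt.comp_hasDerivAt x hf

theorem HasDerivAt.matrix_fromBlocks {A : ℝ → Matrix n l ℂ} {B : ℝ → Matrix n m ℂ}
    {C : ℝ → Matrix o l ℂ} {D : ℝ → Matrix o m ℂ} {A' : Matrix n l ℂ} {B' : Matrix n m ℂ}
    {C' : Matrix o l ℂ} {D' : Matrix o m ℂ} {x : ℝ}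
    (hA : HasDerivAt A A' x) (hB : HasDerivAt B B' x) (hC : HasDerivAt C C' x)
    (hD : HasDerivAt D D' x) :
    HasDerivAt (fun y => fromBlocks (A y) (B y) (C y) (D y)) (fromBlocks A' B' C' D') x := by
  let L : (Matrix n l ℂ × Matrix n m ℂ) × (Matrix o l ℂ × Matrix o m ℂ) →L[ℝ]
      Matrix (n ⊕ o) (l ⊕ m) ℂ := LinearMap.toContinuousLinearMap
    { toFun := fun p => fromBlocks p.1.1 p.1.2 p.2.1 p.2.2
      map_add' := fun p p' => (fromBlocks_add ..).symm
      map_smul' := fun r p => (fromBlocks_smul ..).symm }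
  exact L.hasFDerivAt.comp_hasDerivAt x ((hA.prodMk hB).prodMk (hC.prodMk hD))

variable [DecidableEq n]

theorem HasDerivAt.mul_mul_star {E X : ℝ → Matrix n n ℂ} {A X' : Matrix n n ℂ} {x : ℝ}
    (hE : HasDerivAt E (E x * A) x) (hA : star A = -A) (hX : HasDerivAt X X' x) :
    HasDerivAt (fun y => E y * X y * star (E y)) (E x * (⁅A, X x⁆ + X') * star (E x)) x := by
  convert (hE.matrix_mul hX).matrix_mul hE.star using 1
  rw [star_mul, hA, Ring.lie_def]
  noncomm_ring

theorem hasDerivAt_of_star_mul_deriv_eq {E : ℝ → Matrix n n ℂ} {A : Matrix n n ℂ} {x : ℝ}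
    (hU : E x ∈ unitaryGroup n ℂ) (hd : DifferentiableAt ℝ E x)
    (h : star (E x) * deriv E x = A) : HasDerivAt E (E x * A) x := by
  rw [← h, ← mul_assoc, Unitary.mul_star_self_of_mem hU, one_mul]
  exact hd.hasDerivAt

end Calculus

section Partial

variable {F : Type*} [NormedAddCommGroup F] [NormedSpace ℝ F] {f : ℝ → ℝ → F}

theorem differentiableAt_partial_fst (hf : Differentiable ℝ fun p : ℝ × ℝ => f p.1 p.2)
    (x t : ℝ) : DifferentiableAt ℝ (fun y => f y t) x :=
  (hf (x, t)).comp (𝕜 := ℝ) (g := fun p : ℝ × ℝ => f p.1 p.2) x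
    (differentiableAt_id.prodMk (differentiableAt_const t))

theorem differentiableAt_partial_snd (hf : Differentiable ℝ fun p : ℝ × ℝ => f p.1 p.2)
    (x t : ℝ) : DifferentiableAt ℝ (fun s => f x s) t :=
  (hf (x, t)).comp (𝕜 := ℝ) (g := fun p : ℝ × ℝ => f p.1 p.2) t
    ((differentiableAt_const x).prodMk differentiableAt_id)

end Partial

theorem lie_conj_unitary {R : Type*} [Ring R] [StarMul R] {U : R} (hU : U ∈ unitary R)
    (X Y : R) : ⁅U * X * star U, U * Y * star U⁆ = U * ⁅X, Y⁆ * star U := by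
  have h := Unitary.star_mul_self_of_mem hU
  simp only [Ring.lie_def, mul_sub, sub_mul, mul_assoc]
  simp only [← mul_assoc (star U) U, h, one_mul]

section Blocks

variable {l m : Type*}

theorem fromBlocks_sub_fromBlocks {R : Type*} [AddGroup R] (A A' : Matrix l l R)
    (B B' : Matrix l m R) (C C' : Matrix m l R) (D D' : Matrix m m R) :
    fromBlocks A B C D - fromBlocks A' B' C' D' =
      fromBlocks (A - A') (B - B') (C - C') (D - D') := by
  simp only [sub_eq_add_neg, fromBlocks_neg, fromBlocks_add]

def mnlsU (q : Matrix l m ℂ) : Matrix (l ⊕ m) (l ⊕ m) ℂ := fromBlocks 0 q (-qᴴ) 0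

theorem star_mnlsU (q : Matrix l m ℂ) : star (mnlsU q) = -mnlsU q := by
  simp [mnlsU, star_eq_conjTranspose, fromBlocks_conjTranspose, fromBlocks_neg]

theorem HasDerivAt.mnlsU [Fintype l] [Fintype m] {f : ℝ → Matrix l m ℂ} {f' : Matrix l m ℂ}
    {x : ℝ} (hf : HasDerivAt f f' x) : HasDerivAt (fun y => mnlsU (f y)) (mnlsU f') x :=
  (hasDerivAt_const x 0).matrix_fromBlocks hf hf.matrix_conjTranspose.neg (hasDerivAt_const x 0)

variable [Fintype l] [Fintype m]

noncomputable def mnlsQ₂ (q p : Matrix l m ℂ) : Matrix (l ⊕ m) (l ⊕ m) ℂ :=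
  fromBlocks ((-Complex.I) • (q * qᴴ)) (Complex.I • p) (Complex.I • pᴴ) (Complex.I • (qᴴ * q))

theorem star_mnlsQ₂ (q p : Matrix l m ℂ) : star (mnlsQ₂ q p) = -mnlsQ₂ q p := by
  simp [mnlsQ₂, star_eq_conjTranspose, fromBlocks_conjTranspose, fromBlocks_neg,
    conjTranspose_smul, conjTranspose_mul]

variable [DecidableEq l] [DecidableEq m]

variable (l m) in
noncomputable def halfISign : Matrix (l ⊕ m) (l ⊕ m) ℂ :=
  (Complex.I / 2) • fromBlocks 1 0 0 (-1)

theorem lie_halfISign_fromBlocks (A : Matrix l l ℂ) (B : Matrix l m ℂ) (C : Matrix m l ℂ)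
    (D : Matrix m m ℂ) :
    ⁅halfISign l m, fromBlocks A B C D⁆ = Complex.I • fromBlocks 0 B (-C) 0 := by
  simp only [halfISign, Ring.lie_def, Matrix.smul_mul, Matrix.mul_smul, fromBlocks_multiply,
    fromBlocks_sub_fromBlocks, fromBlocks_smul, Matrix.one_mul, Matrix.mul_one, Matrix.zero_mul,
    Matrix.mul_zero, Matrix.neg_mul, Matrix.mul_neg]
  congr 1 <;> module

theorem lie_fromBlocks_halfISign (A : Matrix l l ℂ) (B : Matrix l m ℂ) (C : Matrix m l ℂ)
    (D : Matrix m m ℂ) :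
    ⁅fromBlocks A B C D, halfISign l m⁆ = Complex.I • fromBlocks 0 (-B) C 0 := by
  rw [← lie_skew, lie_halfISign_fromBlocks, ← smul_neg, fromBlocks_neg]
  simp

theorem lie_fromBlocks_offDiag (B B' : Matrix l m ℂ) (C C' : Matrix m l ℂ) :
    ⁅fromBlocks 0 B C 0, fromBlocks 0 B' C' 0⁆ =
      fromBlocks (B * C' - B' * C) 0 0 (C * B' - C' * B) := by
  simp [Ring.lie_def, fromBlocks_multiply, fromBlocks_sub_fromBlocks]

theorem lie_halfISign_lie_offDiag_halfISign (B : Matrix l m ℂ) (C : Matrix m l ℂ) :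
    ⁅halfISign l m, ⁅fromBlocks 0 B C 0, halfISign l m⁆⁆ = fromBlocks 0 B C 0 := by
  rw [lie_fromBlocks_halfISign, lie_smul, lie_halfISign_fromBlocks, smul_smul]
  simp [fromBlocks_neg]

theorem lie_halfISign_lie_lie_offDiag (B : Matrix l m ℂ) (C : Matrix m l ℂ) :
    ⁅halfISign l m, ⁅fromBlocks 0 B C 0, ⁅fromBlocks 0 B C 0, halfISign l m⁆⁆⁆ = 0 := by
  rw [lie_fromBlocks_halfISign, lie_smul, lie_fromBlocks_offDiag, lie_smul,
    lie_halfISign_fromBlocks]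
  simp

theorem lie_mnlsQ₂_halfISign (q p : Matrix l m ℂ) :
    ⁅mnlsQ₂ q p, halfISign l m⁆ =
      ⁅halfISign l m, ⁅mnlsU q, ⁅mnlsU q, halfISign l m⁆⁆ + ⁅mnlsU p, halfISign l m⁆⁆ := by
  rw [lie_add, mnlsU, lie_halfISign_lie_lie_offDiag, zero_add, mnlsU,
    lie_halfISign_lie_offDiag_halfISign, mnlsQ₂, lie_fromBlocks_halfISign, fromBlocks_smul]
  simp [smul_smul]

end Blocks

theorem stmt4_general (k m : ℕ)
    (a : Matrix (Fin k ⊕ Fin m) (Fin k ⊕ Fin m) ℂ)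
    (ha : a = (Complex.I / 2) • Matrix.fromBlocks 1 0 0 (-1))
    (q : ℝ → ℝ → Matrix (Fin k) (Fin m) ℂ)
    (hq : ContDiff ℝ (⊤ : ℕ∞) fun p : ℝ × ℝ => q p.1 p.2)
    -- partial derivatives of q
    (qx : ℝ → ℝ → Matrix (Fin k) (Fin m) ℂ)
    (hqx : ∀ x t, qx x t = deriv (fun y => q y t) x)
    -- the associated block matrices u and Q₂
    (u Q₂ : ℝ → ℝ → Matrix (Fin k ⊕ Fin m) (Fin k ⊕ Fin m) ℂ)
    (hu : ∀ x t, u x t = Matrix.fromBlocks 0 (q x t) (-(q x t)ᴴ) 0)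
    (hQ₂ : ∀ x t, Q₂ x t = Matrix.fromBlocks
        ((-Complex.I) • (q x t * (q x t)ᴴ)) (Complex.I • qx x t)
        (Complex.I • (qx x t)ᴴ) (Complex.I • ((q x t)ᴴ * q x t)))
    -- the smooth unitary frame E
    (E : ℝ → ℝ → Matrix (Fin k ⊕ Fin m) (Fin k ⊕ Fin m) ℂ)
    (hE : ContDiff ℝ (⊤ : ℕ∞) fun p : ℝ × ℝ => E p.1 p.2)
    (hEunitary : ∀ x t, E x t ∈ Matrix.unitaryGroup (Fin k ⊕ Fin m) ℂ)
    -- E⁻¹E_x = u and E⁻¹E_t = Q₂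
    (hEx : ∀ x t, star (E x t) * deriv (fun y => E y t) x = u x t)
    (hEt : ∀ x t, star (E x t) * deriv (fun s => E x s) t = Q₂ x t)
    -- γ = E a E⁻¹ and its partial derivatives
    (γ γx γxx γt : ℝ → ℝ → Matrix (Fin k ⊕ Fin m) (Fin k ⊕ Fin m) ℂ)
    (hγ : ∀ x t, γ x t = E x t * a * star (E x t))
    (hγx : ∀ x t, γx x t = deriv (fun y => γ y t) x)
    (hγxx : ∀ x t, γxx x t = deriv (fun y => γx y t) x)
    (hγt : ∀ x t, γt x t = deriv (fun s => γ x s) t) :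
    -- γ satisfies the GNLS equation γ_t = [γ, γ_xx]
    ∀ x t, γt x t = γ x t * γxx x t - γxx x t * γ x t := by
  obtain rfl : a = halfISign (Fin k) (Fin m) := ha
  obtain rfl : u = fun x t => mnlsU (q x t) := funext₂ hu
  obtain rfl : Q₂ = fun x t => mnlsQ₂ (q x t) (qx x t) := funext₂ hQ₂
  obtain rfl : γ = fun x t => E x t * halfISign _ _ * star (E x t) := funext₂ hγ
  have hqd (y s : ℝ) : HasDerivAt (fun y => q y s) (qx y s) y :=
    hqx y s ▸ (differentiableAt_partial_fst (hq.differentiable (by simp)) y s).hasDerivAt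
  have hEd (y s : ℝ) : HasDerivAt (fun y => E y s) (E y s * mnlsU (q y s)) y :=
    hasDerivAt_of_star_mul_deriv_eq (hEunitary y s)
      (differentiableAt_partial_fst (hE.differentiable (by simp)) y s) (hEx y s)
  have hEdt (y s : ℝ) : HasDerivAt (fun s => E y s) (E y s * mnlsQ₂ (q y s) (qx y s)) s :=
    hasDerivAt_of_star_mul_deriv_eq (hEunitary y s)
      (differentiableAt_partial_snd (hE.differentiable (by simp)) y s) (hEt y s)
  intro x t
  have hγx_eq (y : ℝ) : γx y t = E y t * ⁅mnlsU (q y t), halfISign _ _⁆ * star (E y t) :=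
    (hγx y t).trans <| ((hEd y t).mul_mul_star (star_mnlsU _)
      (hasDerivAt_const y _)).deriv.trans (by rw [add_zero])
  have hγxx_eq : γxx x t = E x t * (⁅mnlsU (q x t), ⁅mnlsU (q x t), halfISign _ _⁆⁆ +
      ⁅mnlsU (qx x t), halfISign _ _⁆) * star (E x t) := by
    rw [hγxx, funext hγx_eq]
    exact ((hEd x t).mul_mul_star (star_mnlsU _)
      ((hqd x t).mnlsU.matrix_lie (hasDerivAt_const x _))).deriv.trans (by rw [lie_zero, add_zero])
  have hγt_eq : γt x t = E x t * ⁅mnlsQ₂ (q x t) (qx x t), halfISign _ _⁆ * star (E x t) :=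
    (hγt x t).trans <| ((hEdt x t).mul_mul_star (star_mnlsQ₂ _ _)
      (hasDerivAt_const t _)).deriv.trans (by rw [add_zero])
  rw [hγt_eq, hγxx_eq, ← Ring.lie_def, lie_conj_unitary (hEunitary x t), lie_mnlsQ₂_halfISign]

/-- Gauge equivalence of MNLS and GNLS: if `q` is a smooth solution of the
matrix nonlinear Schrödinger equation `q_t = i(q_xx + 2qq*q)`, `u = [[0,q],[−q*,0]]`,
`Q₂ = [[−iqq*, iq_x],[iq_x*, iq*q]]`, and `E : ℝ² → U(n)` is a smooth map with
`E⁻¹E_x = u` and `E⁻¹E_t = Q₂`, then `γ := E a E⁻¹` (with `a = (i/2)·diag(I_k, −I_{n−k})`)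
satisfies the geometric nonlinear Schrödinger equation `γ_t = [γ, γ_xx]`. -/
theorem stmt4 (k m : ℕ) (hk : 0 < k) (hm : 0 < m)
    (a : Matrix (Fin k ⊕ Fin m) (Fin k ⊕ Fin m) ℂ)
    (ha : a = (Complex.I / 2) • Matrix.fromBlocks 1 0 0 (-1))
    (q : ℝ → ℝ → Matrix (Fin k) (Fin m) ℂ)
    (hq : ContDiff ℝ (⊤ : ℕ∞) fun p : ℝ × ℝ => q p.1 p.2)
    -- partial derivatives of q
    (qx qxx qt : ℝ → ℝ → Matrix (Fin k) (Fin m) ℂ)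
    (hqx : ∀ x t, qx x t = deriv (fun y => q y t) x)
    (hqxx : ∀ x t, qxx x t = deriv (fun y => qx y t) x)
    (hqt : ∀ x t, qt x t = deriv (fun s => q x s) t)
    -- q solves the MNLS equation
    (hMNLS : ∀ x t, qt x t = Complex.I • (qxx x t + (2 : ℂ) • (q x t * (q x t)ᴴ * q x t)))
    -- the associated block matrices u and Q₂
    (u Q₂ : ℝ → ℝ → Matrix (Fin k ⊕ Fin m) (Fin k ⊕ Fin m) ℂ)
    (hu : ∀ x t, u x t = Matrix.fromBlocks 0 (q x t) (-(q x t)ᴴ) 0)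
    (hQ₂ : ∀ x t, Q₂ x t = Matrix.fromBlocks
        ((-Complex.I) • (q x t * (q x t)ᴴ)) (Complex.I • qx x t)
        (Complex.I • (qx x t)ᴴ) (Complex.I • ((q x t)ᴴ * q x t)))
    -- the smooth unitary frame E
    (E : ℝ → ℝ → Matrix (Fin k ⊕ Fin m) (Fin k ⊕ Fin m) ℂ)
    (hE : ContDiff ℝ (⊤ : ℕ∞) fun p : ℝ × ℝ => E p.1 p.2)
    (hEunitary : ∀ x t, E x t ∈ Matrix.unitaryGroup (Fin k ⊕ Fin m) ℂ)
    -- E⁻¹E_x = u and E⁻¹E_t = Q₂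
    (hEx : ∀ x t, star (E x t) * deriv (fun y => E y t) x = u x t)
    (hEt : ∀ x t, star (E x t) * deriv (fun s => E x s) t = Q₂ x t)
    -- γ = E a E⁻¹ and its partial derivatives
    (γ γx γxx γt : ℝ → ℝ → Matrix (Fin k ⊕ Fin m) (Fin k ⊕ Fin m) ℂ)
    (hγ : ∀ x t, γ x t = E x t * a * star (E x t))
    (hγx : ∀ x t, γx x t = deriv (fun y => γ y t) x)
    (hγxx : ∀ x t, γxx x t = deriv (fun y => γx y t) x)
    (hγt : ∀ x t, γt x t = deriv (fun s => γ x s) t) :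
    -- γ satisfies the GNLS equation γ_t = [γ, γ_xx]
    ∀ x t, γt x t = γ x t * γxx x t - γxx x t * γ x t :=
  stmt4_general k m a ha q hq qx hqx u Q₂ hu hQ₂ E hE hEunitary hEx hEt γ γx γxx γt hγ hγx hγxx hγt
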